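/- arXiv:1704.03999 — 6 statements merged into one kernel-verified Lean document; each statement's English description precedes it below -/
import Mathlib

section
/- Let V be a finite-dimensional complex vector space with a nondegenerate Hermitian form ℓ, and let A : V → V be an anti-linear, ℓ-self-adjoint map satisfying A² = -Id. Then the signature of ℓ is split, i.e. if (p, q) denotes the signature of ℓ then p = q. -/
lemma aux_key {V : Type*} [AddCommGroup V] [Module ℂ V] [FiniteDimensional ℂ V]
    (ℓ : V → V → ℂ)
    (hladd : ∀ x₁ x₂ y : V, ℓ (x₁ + x₂) y = ℓ x₁ y + ℓ x₂ y)
    (hlsmul : ∀ (c : ℂ) (x y : V), ℓ (c • x) y = c * ℓ x y)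
    (hlherm : ∀ x y : V, ℓ y x = starRingEnd ℂ (ℓ x y))
    (A : V → V)
    (hAadd : ∀ x y : V, A (x + y) = A x + A y)
    (hAsmul : ∀ (c : ℂ) (x : V), A (c • x) = starRingEnd ℂ c • A x)
    (hAsa : ∀ x y : V, ℓ (A x) y = ℓ (A y) x)
    (hA2 : ∀ v : V, A (A v) = -v)
    (m : ℕ) (v : Fin m → V) (hv : LinearIndependent ℂ v)
    (σ : ℝ) (hσ : σ ≠ 0)
    (hov : ∀ i j, ℓ (v i) (v j) = if i = j then (σ : ℂ) else 0) :
    m + m ≤ Module.finrank ℂ V := by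
  classical
  have A0 : A 0 = 0 := by simpa using hAsmul 0 0
  have l0 : ∀ y, ℓ 0 y = 0 := by
    intro y
    have h := hladd 0 0 y
    rw [add_zero] at h
    exact (left_eq_add.mp h)
  have lneg : ∀ x y, ℓ (-x) y = - ℓ x y := by
    intro x y
    have h := hladd x (-x) y
    rw [add_neg_cancel, l0] at h
    linear_combination -h
  have lsum_left : ∀ {ι : Type} (t : Finset ι) (f : ι → V) (y : V),
      ℓ (∑ i ∈ t, f i) y = ∑ i ∈ t, ℓ (f i) y := fun t f y =>
    map_sum (AddMonoidHom.mk' (fun x => ℓ x y) (fun a b => hladd a b y)) f t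
  have hsmul_right : ∀ (c : ℂ) (x y : V), ℓ x (c • y) = starRingEnd ℂ c * ℓ x y := by
    intro c x y
    calc ℓ x (c • y) = starRingEnd ℂ (ℓ (c • y) x) := hlherm (c • y) x
      _ = starRingEnd ℂ (c * ℓ y x) := by rw [hlsmul]
      _ = starRingEnd ℂ c * starRingEnd ℂ (ℓ y x) := map_mul _ _ _
      _ = starRingEnd ℂ c * ℓ x y := by rw [← hlherm y x]
  have lsum_right : ∀ {ι : Type} (t : Finset ι) (f : ι → V) (x : V),
      ℓ x (∑ i ∈ t, f i) = ∑ i ∈ t, ℓ x (f i) := by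
    intro ι t f x
    calc ℓ x (∑ i ∈ t, f i) = starRingEnd ℂ (ℓ (∑ i ∈ t, f i) x) := hlherm _ x
      _ = starRingEnd ℂ (∑ i ∈ t, ℓ (f i) x) := by rw [lsum_left]
      _ = ∑ i ∈ t, starRingEnd ℂ (ℓ (f i) x) := map_sum _ _ _
      _ = ∑ i ∈ t, ℓ x (f i) := Finset.sum_congr rfl fun i _ => (hlherm (f i) x).symm
  have Asum : ∀ {ι : Type} (t : Finset ι) (f : ι → V),
      A (∑ i ∈ t, f i) = ∑ i ∈ t, A (f i) := fun t f =>
    map_sum (AddMonoidHom.mk' A hAadd) f t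
  have Asmul' : ∀ (c : ℂ) (x : V), A (starRingEnd ℂ c • x) = c • A x := by
    intro c x; rw [hAsmul]; simp
  have lAA : ∀ x, ℓ (A x) (A x) = - ℓ x x := by
    intro x
    rw [hAsa x (A x), hA2, lneg]
  have lcalc : ∀ c d : Fin m → ℂ,
      ℓ (∑ i, c i • v i) (∑ j, d j • v j)
        = (σ : ℂ) * ∑ i, c i * starRingEnd ℂ (d i) := by
    intro c d
    rw [lsum_left, Finset.mul_sum]
    refine Finset.sum_congr rfl fun i _ => ?_
    rw [hlsmul, lsum_right]
    have h1 : ∀ j, ℓ (v i) (d j • v j)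
        = starRingEnd ℂ (d j) * (if i = j then (σ : ℂ) else 0) := fun j => by
      rw [hsmul_right, hov]
    rw [Finset.sum_congr rfl fun j _ => h1 j]
    simp only [mul_ite, mul_zero]
    rw [Finset.sum_ite_eq (Finset.univ) i (fun j => starRingEnd ℂ (d j) * (σ : ℂ))]
    simp only [Finset.mem_univ, if_true]
    ring
  have lself : ∀ c : Fin m → ℂ,
      ℓ (∑ i, c i • v i) (∑ i, c i • v i)
        = ((σ * ∑ i, Complex.normSq (c i) : ℝ) : ℂ) := by
    intro c
    rw [lcalc]
    push_cast
    congr 1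
    exact Finset.sum_congr rfl fun i _ => (Complex.mul_conj (c i))
  set u : Fin m → V := fun i => A (v i) with hu
  have hAw : ∀ c : Fin m → ℂ,
      ∑ i, c i • u i = A (∑ i, starRingEnd ℂ (c i) • v i) := by
    intro c
    rw [Asum]
    exact Finset.sum_congr rfl fun i _ => (Asmul' (c i) (v i)).symm
  have hu_li : LinearIndependent ℂ u := by
    rw [Fintype.linearIndependent_iff]
    intro c hc
    have h1 : A (∑ i, starRingEnd ℂ (c i) • v i) = 0 := by rw [← hAw]; exact hc
    have h2 : (∑ i, starRingEnd ℂ (c i) • v i) = 0 := by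
      have h3 := congrArg A h1
      rw [hA2, A0] at h3
      simpa using h3
    intro i
    have h4 := (Fintype.linearIndependent_iff.mp hv) _ h2 i
    simpa using h4
  set P := Submodule.span ℂ (Set.range v) with hP
  set U := Submodule.span ℂ (Set.range u) with hU
  have hinf : P ⊓ U = ⊥ := by
    rw [Submodule.eq_bot_iff]
    intro x hx
    rw [Submodule.mem_inf] at hx
    obtain ⟨hxP, hxU⟩ := hx
    obtain ⟨c, hc⟩ := (Submodule.mem_span_range_iff_exists_fun ℂ).mp hxP
    obtain ⟨d, hd⟩ := (Submodule.mem_span_range_iff_exists_fun ℂ).mp hxU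
    have e1 : ℓ x x = ((σ * ∑ i, Complex.normSq (c i) : ℝ) : ℂ) := by
      rw [← hc]; exact lself c
    have e2 : ℓ x x = -((σ * ∑ i, Complex.normSq (d i) : ℝ) : ℂ) := by
      rw [← hd, hAw, lAA, lself]
      simp [Complex.normSq_conj]
    have e3 : (σ * ∑ i, Complex.normSq (c i)) = -(σ * ∑ i, Complex.normSq (d i)) := by
      have := e1.symm.trans e2
      exact_mod_cast this
    have hc0 : (0:ℝ) ≤ ∑ i, Complex.normSq (c i) :=
      Finset.sum_nonneg fun i _ => Complex.normSq_nonneg (c i)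
    have hd0 : (0:ℝ) ≤ ∑ i, Complex.normSq (d i) :=
      Finset.sum_nonneg fun i _ => Complex.normSq_nonneg (d i)
    have hsum : ∑ i, Complex.normSq (c i) = 0 := by
      have h' : σ * ((∑ i, Complex.normSq (c i)) + ∑ i, Complex.normSq (d i)) = 0 := by
        linear_combination e3
      have h'' := (mul_eq_zero.mp h').resolve_left hσ
      linarith
    have hci : ∀ i, c i = 0 := fun i =>
      Complex.normSq_eq_zero.mp
        ((Finset.sum_eq_zero_iff_of_nonneg
          (fun i _ => Complex.normSq_nonneg (c i))).mp hsum i (Finset.mem_univ i))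
    rw [← hc]
    simp [hci]
  have hPr : Module.finrank ℂ P = m := by
    rw [hP, finrank_span_eq_card hv, Fintype.card_fin]
  have hUr : Module.finrank ℂ U = m := by
    rw [hU, finrank_span_eq_card hu_li, Fintype.card_fin]
  have hsum := Submodule.finrank_sup_add_finrank_inf_eq P U
  rw [hinf] at hsum
  simp only [finrank_bot, add_zero] at hsum
  have hle := Submodule.finrank_le (P ⊔ U)
  omega

/-- If a nondegenerate Hermitian form `ℓ` of signature `(p, q)` admits an anti-linear
self-adjoint map `A` with `A² = -Id`, then the signature is split: `p = q`. -/
theorem stmt1 (V : Type*) [AddCommGroup V] [Module ℂ V] [FiniteDimensional ℂ V]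
    (ℓ : V → V → ℂ)
    (hladd : ∀ x₁ x₂ y : V, ℓ (x₁ + x₂) y = ℓ x₁ y + ℓ x₂ y)
    (hlsmul : ∀ (c : ℂ) (x y : V), ℓ (c • x) y = c * ℓ x y)
    (hlherm : ∀ x y : V, ℓ y x = starRingEnd ℂ (ℓ x y))
    (hlnd : ∀ x : V, (∀ y : V, ℓ x y = 0) → x = 0)
    (A : V → V)
    (hAadd : ∀ x y : V, A (x + y) = A x + A y)
    (hAsmul : ∀ (c : ℂ) (x : V), A (c • x) = starRingEnd ℂ c • A x)
    (hAsa : ∀ x y : V, ℓ (A x) y = ℓ (A y) x)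
    (hA2 : ∀ v : V, A (A v) = -v)
    (p q : ℕ) (b : Module.Basis (Fin (p + q)) ℂ V)
    (hb : ∀ i j : Fin (p + q),
      ℓ (b i) (b j) = if i = j then (if (i : ℕ) < p then 1 else -1) else 0) :
    p = q := by
  have hrank : Module.finrank ℂ V = p + q := by
    rw [Module.finrank_eq_card_basis b, Fintype.card_fin]
  have hcast : Function.Injective (Fin.castAdd q : Fin p → Fin (p + q)) :=
    Fin.castAdd_injective p q
  have hnat : Function.Injective (Fin.natAdd p : Fin q → Fin (p + q)) :=
    fun i j h => by
      have := congrArg Fin.val h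
      simp [Fin.natAdd] at this
      exact Fin.ext this
  have h1 : p + p ≤ Module.finrank ℂ V := by
    refine aux_key ℓ hladd hlsmul hlherm A hAadd hAsmul hAsa hA2 p
      (fun i => b (Fin.castAdd q i)) (b.linearIndependent.comp _ hcast) 1 one_ne_zero ?_
    intro i j
    rw [hb]
    have hlt : ((Fin.castAdd q i : Fin (p+q)) : ℕ) < p := by
      simp [Fin.castAdd, Fin.is_lt]
    rw [if_pos hlt]
    by_cases h : i = j
    · simp [h]
    · rw [if_neg (fun hh => h (hcast hh)), if_neg h]
  have h2 : q + q ≤ Module.finrank ℂ V := by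
    refine aux_key ℓ hladd hlsmul hlherm A hAadd hAsmul hAsa hA2 q
      (fun i => b (Fin.natAdd p i)) (b.linearIndependent.comp _ hnat) (-1) (by norm_num) ?_
    intro i j
    rw [hb]
    have hlt : ¬ ((Fin.natAdd p i : Fin (p+q)) : ℕ) < p := by
      simp [Fin.natAdd]
    rw [if_neg hlt]
    by_cases h : i = j
    · simp [h]
    · rw [if_neg (fun hh => h (hnat hh)), if_neg h]
  omega
end

section
/- Let V be a finite-dimensional complex vector space with a nondegenerate Hermitian form ℓ and A : V → V an anti-linear, ℓ-self-adjoint map satisfying A³ = α A for some nonzero real α. Set Z = ker A and W = range A. Then Z ∩ W = {0}, V = Z ⊕ W, and A²|_W = α·Id_W. -/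
/-- If `A` is anti-linear, `ℓ`-self-adjoint, and `A³ = α A` with `α` real nonzero, then
`ker A ∩ range A = 0`, `V = ker A ⊕ range A`, and `A² = α·Id` on `range A`. -/
theorem stmt2 (V : Type*) [AddCommGroup V] [Module ℂ V] [FiniteDimensional ℂ V]
    (ℓ : V → V → ℂ)
    (hladd : ∀ x₁ x₂ y : V, ℓ (x₁ + x₂) y = ℓ x₁ y + ℓ x₂ y)
    (hlsmul : ∀ (c : ℂ) (x y : V), ℓ (c • x) y = c * ℓ x y)
    (hlherm : ∀ x y : V, ℓ y x = starRingEnd ℂ (ℓ x y))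
    (hlnd : ∀ x : V, (∀ y : V, ℓ x y = 0) → x = 0)
    (A : V → V)
    (hAadd : ∀ x y : V, A (x + y) = A x + A y)
    (hAsmul : ∀ (c : ℂ) (x : V), A (c • x) = starRingEnd ℂ c • A x)
    (hAsa : ∀ x y : V, ℓ (A x) y = ℓ (A y) x)
    (α : ℝ) (hα : α ≠ 0)
    (hA3 : ∀ v : V, A (A (A v)) = (α : ℂ) • A v) :
    (∀ v : V, A v = 0 → v ∈ Set.range A → v = 0) ∧
      (∀ v : V, ∃! zw : V × V, A zw.1 = 0 ∧ zw.2 ∈ Set.range A ∧ v = zw.1 + zw.2) ∧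
      (∀ w ∈ Set.range A, A (A w) = (α : ℂ) • w) := by
  have hαC : (α : ℂ) ≠ 0 := by exact_mod_cast hα
  have hA0 : A 0 = 0 := by
    have h := hAadd 0 0
    simpa using h.symm
  have key : ∀ w ∈ Set.range A, A (A w) = (α : ℂ) • w := by
    rintro w ⟨u, rfl⟩; exact hA3 u
  have part1 : ∀ v : V, A v = 0 → v ∈ Set.range A → v = 0 := by
    intro v hv hr
    have h := key v hr
    rw [hv, hA0] at h
    rcases smul_eq_zero.1 h.symm with h' | h'
    · exact absurd h' hαC
    · exact h'
  refine ⟨part1, ?_, key⟩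
  intro v
  set c : ℂ := (α : ℂ)⁻¹ with hc
  have hcc : starRingEnd ℂ c = c := by
    simp [hc, ← Complex.ofReal_inv]
  have hsub : ∀ x y : V, A (x - y) = A x - A y := by
    intro x y
    have h := hAadd (x - y) y
    rw [sub_add_cancel] at h
    rw [h]; abel
  refine ⟨(v - c • A (A v), c • A (A v)), ⟨?_, ⟨c • A v, ?_⟩, by rw [sub_add_cancel]⟩, ?_⟩
  · -- A z = 0
    rw [hsub, hAsmul, hcc, hA3, smul_smul, hc, inv_mul_cancel₀ hαC, one_smul, sub_self]
  · rw [hAsmul, hcc]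
  · rintro ⟨z, w⟩ ⟨hz, hw, hsum⟩
    have hAv : A (A v) = (α : ℂ) • w := by
      rw [hsum, hAadd, hz, zero_add, key w hw]
    have hw' : c • A (A v) = w := by
      rw [hAv, smul_smul, hc, inv_mul_cancel₀ hαC, one_smul]
    have hz' : z = v - c • A (A v) := by
      rw [hw', hsum]; abel
    simp [Prod.ext_iff, hz', hw']
end

section
/- Let V be a finite-dimensional complex vector space with a nondegenerate Hermitian form ℓ and A : V → V an anti-linear, ℓ-self-adjoint map with A³ = α A for some nonzero real α. Then the restriction of ℓ to W = range A is nondegenerate, and the restriction of ℓ to Z = ker A is nondegenerate; moreover Z is the ℓ-orthogonal complement of W. -/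
/-- If `A` is anti-linear, `ℓ`-self-adjoint, and `A³ = α A` with `α` real nonzero, then `ℓ`
restricted to `W = range A` is nondegenerate, `ℓ` restricted to `Z = ker A` is nondegenerate,
and `Z` is the `ℓ`-orthogonal complement of `W`. -/
theorem stmt3 (V : Type*) [AddCommGroup V] [Module ℂ V] [FiniteDimensional ℂ V]
    (ℓ : V → V → ℂ)
    (hladd : ∀ x₁ x₂ y : V, ℓ (x₁ + x₂) y = ℓ x₁ y + ℓ x₂ y)
    (hlsmul : ∀ (c : ℂ) (x y : V), ℓ (c • x) y = c * ℓ x y)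
    (hlherm : ∀ x y : V, ℓ y x = starRingEnd ℂ (ℓ x y))
    (hlnd : ∀ x : V, (∀ y : V, ℓ x y = 0) → x = 0)
    (A : V → V)
    (hAadd : ∀ x y : V, A (x + y) = A x + A y)
    (hAsmul : ∀ (c : ℂ) (x : V), A (c • x) = starRingEnd ℂ c • A x)
    (hAsa : ∀ x y : V, ℓ (A x) y = ℓ (A y) x)
    (α : ℝ) (hα : α ≠ 0)
    (hA3 : ∀ v : V, A (A (A v)) = (α : ℂ) • A v) :
    (∀ w ∈ Set.range A, (∀ w' ∈ Set.range A, ℓ w w' = 0) → w = 0) ∧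
      (∀ z : V, A z = 0 → (∀ z' : V, A z' = 0 → ℓ z z' = 0) → z = 0) ∧
      (∀ v : V, A v = 0 ↔ ∀ w ∈ Set.range A, ℓ v w = 0) := by
  have hl0 : ∀ y : V, ℓ 0 y = 0 := by
    intro y
    have := hlsmul 0 0 y
    simpa using this
  have hA0 : A 0 = 0 := by
    have := hAsmul 0 0
    simpa using this
  have hzero : ∀ z : V, A z = 0 → ∀ y : V, ℓ z (A y) = 0 := by
    intro z hz y
    rw [hlherm, hAsa, hz, hl0, map_zero]
  have hperp : ∀ v : V, A v = 0 ↔ ∀ w ∈ Set.range A, ℓ v w = 0 := by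
    intro v
    constructor
    · rintro hv w ⟨y, rfl⟩
      exact hzero v hv y
    · intro h
      apply hlnd
      intro y
      have h1 : ℓ v (A y) = 0 := h (A y) ⟨y, rfl⟩
      rw [hAsa, hlherm v (A y), h1, map_zero]
  refine ⟨?_, ?_, hperp⟩
  · rintro w ⟨x, rfl⟩ hw
    have hAw : A (A x) = 0 := (hperp (A x)).mpr hw
    have h3 := hA3 x
    rw [hAw, hA0] at h3
    have : (α : ℂ) ≠ 0 := by exact_mod_cast hα
    rcases smul_eq_zero.mp h3.symm with h | h
    · exact absurd h this
    · exact h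
  · intro z hz h
    apply hlnd
    intro v
    set u : V := ((α : ℂ))⁻¹ • A (A v) with hu
    have hαc : (α : ℂ) ≠ 0 := by exact_mod_cast hα
    have hAu : A u = A v := by
      rw [hu, hAsmul]
      have hc : (starRingEnd ℂ) (((α : ℂ))⁻¹) = ((α : ℂ))⁻¹ := by
        rw [← Complex.ofReal_inv]
        exact Complex.conj_ofReal _
      rw [hc, hA3, smul_smul, inv_mul_cancel₀ hαc, one_smul]
    have hker : A (v - u) = 0 := by
      have hneg : A (-u) = - A u := by
        have := hAsmul (-1) u
        simpa using this
      have : A (v - u) = A v + A (-u) := by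
        rw [sub_eq_add_neg, hAadd]
      rw [this, hneg, hAu, add_neg_cancel]
    have h1 : ℓ z (v - u) = 0 := h (v - u) hker
    have h2 : ℓ z u = 0 := by
      rw [hlherm, hu, hlsmul, hlherm z (A (A v)), hzero z hz (A v)]
      simp
    have hsplit : ℓ z v = ℓ z (v - u) + ℓ z u := by
      rw [hlherm v z, hlherm (v - u) z, hlherm u z, ← map_add, ← hladd, sub_add_cancel]
    rw [hsplit, h1, h2, add_zero]
end

section
/- Let V be a finite-dimensional complex vector space with nondegenerate Hermitian form ℓ and A : V → V anti-linear, ℓ-self-adjoint, with A² = -Id. Then dim V is even, say dim V = 2p, the signature of ℓ is (p, p), and there exists a basis of V in which ℓ is represented by diag(1_p, -1_p) and A by the matrix [[0, -1_p],[1_p, 0]] composed with componentwise complex conjugation. -/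
open Module

universe u




set_option maxHeartbeats 1600000 in
/-- Existence of `e` with `ℓ e e = 1` and `ℓ (A e) e = 0`. -/
theorem existsSpecialVector (V : Type u) [AddCommGroup V] [Module ℂ V] [Nontrivial V]
    (ℓ : V → V → ℂ)
    (hladd : ∀ x₁ x₂ y : V, ℓ (x₁ + x₂) y = ℓ x₁ y + ℓ x₂ y)
    (hlsmul : ∀ (c : ℂ) (x y : V), ℓ (c • x) y = c * ℓ x y)
    (hlherm : ∀ x y : V, ℓ y x = starRingEnd ℂ (ℓ x y))
    (hlnd : ∀ x : V, (∀ y : V, ℓ x y = 0) → x = 0)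
    (A : V → V)
    (hAadd : ∀ x y : V, A (x + y) = A x + A y)
    (hAsmul : ∀ (c : ℂ) (x : V), A (c • x) = starRingEnd ℂ c • A x)
    (hAsa : ∀ x y : V, ℓ (A x) y = ℓ (A y) x)
    (hA2 : ∀ v : V, A (A v) = -v) :
    ∃ e : V, ℓ e e = 1 ∧ ℓ (A e) e = 0 := by
  -- derived sesquilinearity lemmas
  have lzero : ∀ y : V, ℓ 0 y = 0 := fun y => by
    have h := hlsmul 0 0 y; simpa using h
  have laddr : ∀ x y z : V, ℓ x (y + z) = ℓ x y + ℓ x z := fun x y z => by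
    rw [hlherm (y + z) x, hladd, map_add, ← hlherm y x, ← hlherm z x]
  have lsmulr : ∀ (a : ℂ) (x y : V), ℓ x (a • y) = starRingEnd ℂ a * ℓ x y := fun a x y => by
    rw [hlherm (a • y) x, hlsmul, map_mul, ← hlherm y x]
  have lnegl : ∀ x y : V, ℓ (-x) y = -ℓ x y := fun x y => by
    have h := hlsmul (-1) x y; simpa using h
  have lnegr : ∀ x y : V, ℓ x (-y) = -ℓ x y := fun x y => by
    rw [hlherm (-y) x, lnegl, map_neg, ← hlherm y x]
  have lsubr : ∀ x y z : V, ℓ x (y - z) = ℓ x y - ℓ x z := fun x y z => by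
    rw [sub_eq_add_neg, laddr, lnegr, sub_eq_add_neg]
  have lAA : ∀ x y : V, ℓ (A x) (A y) = -ℓ y x := fun x y => by
    rw [hAsa x (A y), hA2, lnegl]
  have Lfun : ∀ y : V, ∃ L : V →ₗ[ℂ] ℂ, ∀ x, L x = ℓ x y := fun y =>
    ⟨{ toFun := fun x => ℓ x y, map_add' := fun a b => hladd a b y,
       map_smul' := fun a x => by simpa using hlsmul a x y }, fun x => rfl⟩
  -- existence of an anisotropic vector
  have hexv : ∃ v : V, ℓ v v ≠ 0 := by
    by_contra hcon
    push_neg at hcon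
    have hall : ∀ x y : V, ℓ x y = 0 := by
      intro x y
      have h1 := hcon (x + y)
      rw [hladd, laddr, laddr, hcon x, hcon y, hlherm x y] at h1
      have h2 := hcon (x + Complex.I • y)
      rw [hladd, laddr, hlsmul, laddr, lsmulr, lsmulr, hcon x, hcon y, hlherm x y,
        Complex.conj_I] at h2
      have h3 : (2 * Complex.I) * ℓ x y = 0 := by
        linear_combination Complex.I * h1 - h2
      have h4 : (2 * Complex.I : ℂ) ≠ 0 := by
        simp [Complex.I_ne_zero]
      exact (mul_eq_zero.mp h3).resolve_left h4
    obtain ⟨x0, hx0⟩ := exists_ne (0 : V)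
    exact hx0 (hlnd x0 (hall x0))
  have hreal : ∀ v : V, ∃ r : ℝ, ℓ v v = (r : ℂ) := fun v =>
    ⟨(ℓ v v).re, (Complex.conj_eq_iff_re.mp (hlherm v v).symm).symm⟩
  -- normalization helper
  have hnorm : ∀ (v : V) (r : ℝ), 0 < r → ℓ v v = (r : ℂ) →
      ℓ (((Real.sqrt r : ℝ) : ℂ)⁻¹ • v) (((Real.sqrt r : ℝ) : ℂ)⁻¹ • v) = 1 := by
    intro v r hr hv
    rw [hlsmul, lsmulr, hv, map_inv₀, Complex.conj_ofReal]
    rw [← Complex.ofReal_inv, ← Complex.ofReal_mul, ← Complex.ofReal_mul,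
      Complex.ofReal_eq_one]
    have hs : (0:ℝ) < Real.sqrt r := Real.sqrt_pos.mpr hr
    field_simp
    rw [Real.sq_sqrt hr.le]
  -- get a vector with ℓ v v = r > 0
  obtain ⟨v0, hv0⟩ := hexv
  obtain ⟨r0, hr0⟩ := hreal v0
  have hr0ne : r0 ≠ 0 := by
    rintro rfl; rw [hr0] at hv0; simp at hv0
  obtain ⟨v1', r1, hr1pos, hv1'⟩ : ∃ (v : V) (r : ℝ), 0 < r ∧ ℓ v v = (r : ℂ) := by
    rcases lt_or_gt_of_ne hr0ne with h | h
    · refine ⟨A v0, -r0, by linarith, ?_⟩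
      rw [lAA, hr0]; push_cast; ring
    · exact ⟨v0, r0, h, hr0⟩
  set v1 : V := ((Real.sqrt r1 : ℝ) : ℂ)⁻¹ • v1' with hv1def
  have hv1 : ℓ v1 v1 = 1 := hnorm v1' r1 hr1pos hv1'
  -- rotate the phase so that ℓ (A v) v is real nonnegative
  obtain ⟨w, hw, s, hspos, hws⟩ :
      ∃ w : V, ℓ w w = 1 ∧ ∃ s : ℝ, 0 ≤ s ∧ ℓ (A w) w = (s : ℂ) := by
    by_cases ht : ℓ (A v1) v1 = 0
    · exact ⟨v1, hv1, 0, le_refl _, by rw [ht]; norm_num⟩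
    · set t := ℓ (A v1) v1 with htdef
      obtain ⟨μ, hμ⟩ := IsAlgClosed.exists_pow_nat_eq
        (((‖t‖ : ℝ) : ℂ) / t) (n := 2) (by norm_num)
      have hμabs : ‖μ‖ = 1 := by
        have h1 : ‖μ‖ ^ 2 = 1 := by
          rw [← norm_pow, hμ, norm_div, Complex.norm_real, Real.norm_eq_abs,
            abs_of_nonneg (norm_nonneg t), div_self (by simpa using ht)]
        have h2 : (‖μ‖ - 1) * (‖μ‖ + 1) = 0 := by ring_nf; nlinarith
        rcases mul_eq_zero.mp h2 with h | h
        · linarith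
        · nlinarith [norm_nonneg μ]
      have hmc : μ * starRingEnd ℂ μ = 1 := by
        rw [Complex.mul_conj, Complex.normSq_eq_norm_sq, hμabs]; norm_num
      refine ⟨(starRingEnd ℂ μ) • v1, ?_, ‖t‖, norm_nonneg t, ?_⟩
      · rw [hlsmul, lsmulr, hv1, Complex.conj_conj, mul_one, mul_comm]
        exact hmc
      · rw [hAsmul, Complex.conj_conj, hlsmul, lsmulr, Complex.conj_conj, ← htdef]
        have : μ * (μ * t) = μ ^ 2 * t := by ring
        rw [this, hμ, div_mul_cancel₀ _ ht]
  -- build e with ℓ e e = 1 and ℓ (A e) e = 0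
  obtain ⟨e, he1, he0⟩ : ∃ e : V, ℓ e e = 1 ∧ ℓ (A e) e = 0 := by
    have hwAw : ℓ w (A w) = (s : ℂ) := by
      rw [hlherm (A w) w, hws, Complex.conj_ofReal]
    have hAwAw : ℓ (A w) (A w) = -1 := by rw [lAA, hw]
    by_cases hs0 : s = 0
    · exact ⟨w, hw, by rw [hws, hs0]; norm_num⟩
    · have hsp : 0 < s := lt_of_le_of_ne hspos (Ne.symm hs0)
      set u := Real.sqrt (1 + s ^ 2) with hu
      have hu2 : u ^ 2 = 1 + s ^ 2 := Real.sq_sqrt (by positivity)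
      have hu1 : 1 < u := by nlinarith [Real.sqrt_nonneg (1 + s ^ 2)]
      set c := (u - 1) / s with hc
      have hcpos : 0 < c := div_pos (by linarith) hsp
      have hkey : s * c ^ 2 + 2 * c - s = 0 := by
        rw [hc]; field_simp; nlinarith
      set e0 : V := w + (c : ℂ) • A w with he0def
      have hAe0 : A e0 = A w + (-(c:ℂ)) • w := by
        rw [he0def, hAadd, hAsmul, Complex.conj_ofReal, hA2, smul_neg, ← neg_smul]
      have g1 : ℓ e0 e0 = ((1 + 2 * c * s - c ^ 2 : ℝ) : ℂ) := by
        rw [he0def, hladd, laddr, hlsmul, laddr, lsmulr, lsmulr, hw, hwAw, hws, hAwAw,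
          Complex.conj_ofReal]
        push_cast; ring
      have g2 : ℓ (A e0) e0 = 0 := by
        rw [hAe0, he0def, hladd, laddr, hlsmul, laddr, lsmulr, lsmulr, hw, hwAw, hws, hAwAw,
          Complex.conj_ofReal]
        have : (s:ℂ) + ↑c * (-1) + -↑c * (1 + ↑c * ↑s) = -((s * c^2 + 2*c - s : ℝ) : ℂ) := by
          push_cast; ring
        rw [this, hkey]; norm_num
      have hg1pos : (0:ℝ) < 1 + 2 * c * s - c ^ 2 := by nlinarith
      refine ⟨((Real.sqrt (1 + 2 * c * s - c ^ 2) : ℝ) : ℂ)⁻¹ • e0, hnorm e0 _ hg1pos g1, ?_⟩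
      rw [hAsmul, hlsmul, lsmulr, g2]
      ring

  exact ⟨e, he1, he0⟩


set_option maxHeartbeats 1600000 in
theorem buildFam (V : Type u) [AddCommGroup V] [Module ℂ V]
    (ℓ : V → V → ℂ) (A : V → V) (p' : ℕ) (e : V) (cf : Fin (2 * p') → V)
    (he1 : ℓ e e = 1) (he0 : ℓ (A e) e = 0) (heAe : ℓ e (A e) = 0)
    (hAeAe : ℓ (A e) (A e) = -1) (hA2e : A (A e) = -e)
    (hce1 : ∀ j, ℓ (cf j) e = 0) (hce2 : ∀ j, ℓ (cf j) (A e) = 0)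
    (hec : ∀ j, ℓ e (cf j) = 0) (hAec : ∀ j, ℓ (A e) (cf j) = 0)
    (hcc : ∀ j k, ℓ (cf j) (cf k) = if j = k then (if (j : ℕ) < p' then 1 else -1) else 0)
    (hAc : ∀ j : Fin (2 * p'), A (cf j) =
      if h : (j : ℕ) < p' then cf ⟨(j : ℕ) + p', (by have := j.isLt; omega : (j : ℕ) + p' < 2 * p' + 0)⟩
      else -cf ⟨(j : ℕ) - p', (by have := j.isLt; omega : (j : ℕ) - p' < 2 * p' + 0)⟩) :
    ∃ bf : Fin (2 * (p' + 1)) → V,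
      (∀ i j : Fin (2 * (p' + 1)),
        ℓ (bf i) (bf j) = if i = j then (if (i : ℕ) < p' + 1 then 1 else -1) else 0) ∧
      (∀ i : Fin (2 * (p' + 1)),
        A (bf i) = if h : (i : ℕ) < p' + 1 then
            bf ⟨(i : ℕ) + (p' + 1), by have := i.isLt; omega⟩
          else -bf ⟨(i : ℕ) - (p' + 1), by have := i.isLt; omega⟩) := by
  set bfam : Fin (2 * (p' + 1)) → V := fun i =>
    if h0 : (i : ℕ) = 0 then e
    else if h1 : (i : ℕ) < p' + 1 then cf ⟨(i : ℕ) - 1, by have := i.isLt; omega⟩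
    else if h2 : (i : ℕ) = p' + 1 then A e
    else cf ⟨(i : ℕ) - 2, by have := i.isLt; omega⟩ with hbfamdef
  have hbe : ∀ i : Fin (2 * (p' + 1)), (i : ℕ) = 0 → bfam i = e := by
    intro i h; rw [hbfamdef]; simp only; rw [dif_pos h]
  have hbc1 : ∀ (i : Fin (2 * (p' + 1))) (h0 : (i : ℕ) ≠ 0) (h1 : (i : ℕ) < p' + 1),
      bfam i = cf ⟨(i : ℕ) - 1, by have := i.isLt; omega⟩ := by
    intro i h0 h1; rw [hbfamdef]; simp only; rw [dif_neg h0, dif_pos h1]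
  have hbf : ∀ i : Fin (2 * (p' + 1)), (i : ℕ) = p' + 1 → bfam i = A e := by
    intro i h; rw [hbfamdef]; simp only
    rw [dif_neg (by omega), dif_neg (by omega), dif_pos h]
  have hbc2 : ∀ (i : Fin (2 * (p' + 1))) (h2 : p' + 1 < (i : ℕ)),
      bfam i = cf ⟨(i : ℕ) - 2, by have := i.isLt; omega⟩ := by
    intro i h2; rw [hbfamdef]; simp only
    rw [dif_neg (by omega), dif_neg (by omega), dif_neg (by omega)]
  have hsec : ∀ k : Fin (2 * (p' + 1)),
      (bfam k = e ∧ (k : ℕ) = 0) ∨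
      (∃ jk : Fin (2 * p'), bfam k = cf jk ∧ (jk : ℕ) = (k : ℕ) - 1 ∧ (jk : ℕ) < p' ∧
        1 ≤ (k : ℕ) ∧ (k : ℕ) < p' + 1) ∨
      (bfam k = A e ∧ (k : ℕ) = p' + 1) ∨
      (∃ jk : Fin (2 * p'), bfam k = cf jk ∧ (jk : ℕ) = (k : ℕ) - 2 ∧ p' ≤ (jk : ℕ) ∧
        p' + 1 < (k : ℕ)) := by
    intro k
    by_cases h0 : (k : ℕ) = 0
    · exact Or.inl ⟨hbe k h0, h0⟩
    · by_cases h1 : (k : ℕ) < p' + 1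
      · exact Or.inr (Or.inl ⟨_, hbc1 k h0 h1, rfl, by show (k:ℕ)-1 < p'; omega, by omega, h1⟩)
      · by_cases h2 : (k : ℕ) = p' + 1
        · exact Or.inr (Or.inr (Or.inl ⟨hbf k h2, h2⟩))
        · exact Or.inr (Or.inr (Or.inr ⟨_, hbc2 k (by omega), rfl,
            by show p' ≤ (k:ℕ)-2; omega, by omega⟩))
  refine ⟨bfam, ?_, ?_⟩
  · intro i j
    rcases hsec i with ⟨hbi, hi⟩ | ⟨ji, hbi, hji, hjilt, hi1, hi2⟩ | ⟨hbi, hi⟩ |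
        ⟨ji, hbi, hji, hjige, hi⟩ <;>
      rcases hsec j with ⟨hbj, hj⟩ | ⟨jj, hbj, hjj, hjjlt, hj1, hj2⟩ | ⟨hbj, hj⟩ |
        ⟨jj, hbj, hjj, hjjge, hj⟩ <;>
      rw [hbi, hbj] <;>
      simp only [hcc, he1, he0, heAe, hAeAe, hec, hAec, hce1, hce2, Fin.ext_iff] <;>
      split_ifs <;>
      first | rfl | (exfalso; omega)
  · intro i
    rcases hsec i with ⟨hbi, hi⟩ | ⟨ji, hbi, hji, hjilt, hi1, hi2⟩ | ⟨hbi, hi⟩ |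
        ⟨ji, hbi, hji, hjige, hi⟩
    · rw [hbi, dif_pos (by omega), hbf _ (by show (i:ℕ) + (p'+1) = p'+1; omega)]
    · rw [hbi, hAc, dif_pos hjilt, dif_pos hi2,
        hbc2 _ (by show p' + 1 < (i:ℕ) + (p'+1); omega)]
      have : (⟨(ji : ℕ) + p', by have := ji.isLt; omega⟩ : Fin (2 * p')) =
          ⟨((i : ℕ) + (p' + 1)) - 2, by have := i.isLt; omega⟩ := by
        apply Fin.ext; show (ji : ℕ) + p' = ((i : ℕ) + (p' + 1)) - 2; omega
      rw [this]
    · rw [hbi, dif_neg (by omega), hA2e, hbe _ (by show (i:ℕ) - (p'+1) = 0; omega)]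
    · rw [hbi, hAc, dif_neg (by omega), dif_neg (by omega),
        hbc1 _ (by show (i:ℕ) - (p'+1) ≠ 0; omega) (by show (i:ℕ) - (p'+1) < p'+1; omega)]
      have : (⟨(ji : ℕ) - p', by have := ji.isLt; omega⟩ : Fin (2 * p')) =
          ⟨((i : ℕ) - (p' + 1)) - 1, by have := i.isLt; omega⟩ := by
        apply Fin.ext; show (ji : ℕ) - p' = ((i : ℕ) - (p' + 1)) - 1; omega
      rw [this]



set_option maxHeartbeats 1600000 in
theorem keyAux (n : ℕ) : ∀ (V : Type u) [AddCommGroup V] [Module ℂ V] [FiniteDimensional ℂ V]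
    (ℓ : V → V → ℂ),
    (∀ x₁ x₂ y : V, ℓ (x₁ + x₂) y = ℓ x₁ y + ℓ x₂ y) →
    (∀ (c : ℂ) (x y : V), ℓ (c • x) y = c * ℓ x y) →
    (∀ x y : V, ℓ y x = starRingEnd ℂ (ℓ x y)) →
    (∀ x : V, (∀ y : V, ℓ x y = 0) → x = 0) →
    ∀ (A : V → V),
    (∀ x y : V, A (x + y) = A x + A y) →
    (∀ (c : ℂ) (x : V), A (c • x) = starRingEnd ℂ c • A x) →
    (∀ x y : V, ℓ (A x) y = ℓ (A y) x) →
    (∀ v : V, A (A v) = -v) →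
    Module.finrank ℂ V = n →
    ∃ p : ℕ, Module.finrank ℂ V = 2 * p ∧
      ∃ b : Basis (Fin (2 * p)) ℂ V,
        (∀ i j : Fin (2 * p),
          ℓ (b i) (b j) = if i = j then (if (i : ℕ) < p then 1 else -1) else 0) ∧
        (∀ i : Fin (2 * p),
          A (b i) = if h : (i : ℕ) < p then
            b ⟨(i : ℕ) + p, (by have := i.isLt; omega : (i : ℕ) + p < 2 * p + 0)⟩
            else -b ⟨(i : ℕ) - p, (by have := i.isLt; omega : (i : ℕ) - p < 2 * p + 0)⟩) := by
  induction n using Nat.strong_induction_on with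
  | _ n ih =>
  intro V _ _ _ ℓ hladd hlsmul hlherm hlnd A hAadd hAsmul hAsa hA2 hn
  by_cases hn0 : n = 0
  · subst hn0
    haveI : Subsingleton V := Module.finrank_zero_iff.mp hn
    haveI : IsEmpty (Fin (2 * 0)) := ⟨fun i => absurd i.isLt (by omega)⟩
    exact ⟨0, by simpa using hn, Basis.empty V,
      fun i => absurd i.isLt (by omega), fun i => absurd i.isLt (by omega)⟩
  · haveI : Nontrivial V := Module.finrank_pos_iff.mp (by rw [hn]; omega)
    -- derived sesquilinearity lemmas
    have laddr : ∀ x y z : V, ℓ x (y + z) = ℓ x y + ℓ x z := fun x y z => by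
      rw [hlherm (y + z) x, hladd, map_add, ← hlherm y x, ← hlherm z x]
    have lsmulr : ∀ (a : ℂ) (x y : V), ℓ x (a • y) = starRingEnd ℂ a * ℓ x y := fun a x y => by
      rw [hlherm (a • y) x, hlsmul, map_mul, ← hlherm y x]
    have lnegl : ∀ x y : V, ℓ (-x) y = -ℓ x y := fun x y => by
      have h := hlsmul (-1) x y; simpa using h
    have lnegr : ∀ x y : V, ℓ x (-y) = -ℓ x y := fun x y => by
      rw [hlherm (-y) x, lnegl, map_neg, ← hlherm y x]
    have lsubr : ∀ x y z : V, ℓ x (y - z) = ℓ x y - ℓ x z := fun x y z => by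
      rw [sub_eq_add_neg, laddr, lnegr, sub_eq_add_neg]
    have lAA : ∀ x y : V, ℓ (A x) (A y) = -ℓ y x := fun x y => by
      rw [hAsa x (A y), hA2, lnegl]
    have Lfun : ∀ y : V, ∃ L : V →ₗ[ℂ] ℂ, ∀ x, L x = ℓ x y := fun y =>
      ⟨{ toFun := fun x => ℓ x y, map_add' := fun a b => hladd a b y,
         map_smul' := fun a x => by simpa using hlsmul a x y }, fun x => rfl⟩
    obtain ⟨e, he1, he0⟩ := existsSpecialVector V ℓ hladd hlsmul hlherm hlnd A
      hAadd hAsmul hAsa hA2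
    have heAe : ℓ e (A e) = 0 := by
      rw [hlherm (A e) e, he0, map_zero]
    have hAeAe : ℓ (A e) (A e) = -1 := by rw [lAA, he1]
    -- the projection map and its kernel
    set f : V →ₗ[ℂ] ℂ × ℂ :=
      { toFun := fun x => (ℓ x e, ℓ x (A e)),
        map_add' := fun a b => by simp only [hladd]; rfl,
        map_smul' := fun a x => by simp only [hlsmul, RingHom.id_apply, Prod.smul_mk,
          smul_eq_mul] } with hfdef
    have hfapp : ∀ x : V, f x = (ℓ x e, ℓ x (A e)) := fun x => rfl
    have hsurj : Function.Surjective f := by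
      intro z
      refine ⟨z.1 • e + (-z.2) • A e, ?_⟩
      rw [hfapp, hladd, hladd, hlsmul, hlsmul, hlsmul, hlsmul, he1, he0, heAe, hAeAe]
      simp
    set W' : Submodule ℂ V := LinearMap.ker f with hW'def
    have hmem : ∀ x : V, x ∈ W' ↔ ℓ x e = 0 ∧ ℓ x (A e) = 0 := fun x => by
      rw [hW'def, LinearMap.mem_ker, hfapp, Prod.mk_eq_zero]
    have hrank : finrank ℂ ↥W' + 2 = n := by
      have h1 := LinearMap.finrank_range_add_finrank_ker f
      rw [LinearMap.range_eq_top.mpr hsurj, finrank_top, Module.finrank_prod,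
        Module.finrank_self, hn, ← hW'def] at h1
      omega
    -- restricted structures
    set ℓ' : ↥W' → ↥W' → ℂ := fun x y => ℓ ↑x ↑y with hl'def
    have hmemA : ∀ x : ↥W', A ↑x ∈ W' := by
      intro x
      obtain ⟨hx1, hx2⟩ := (hmem ↑x).mp x.2
      rw [hmem]
      constructor
      · rw [hAsa, hlherm (x:V) (A e), hx2, map_zero]
      · rw [lAA, hlherm (x:V) e, hx1, map_zero, neg_zero]
    set A' : ↥W' → ↥W' := fun x => ⟨A ↑x, hmemA x⟩ with hA'def
    have hlnd' : ∀ x : ↥W', (∀ y : ↥W', ℓ' x y = 0) → x = 0 := by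
      intro x hx
      obtain ⟨hx1, hx2⟩ := (hmem ↑x).mp x.2
      apply Subtype.ext
      apply hlnd
      intro y
      obtain ⟨Le, hLe⟩ := Lfun e
      obtain ⟨LAe, hLAe⟩ := Lfun (A e)
      have hy' : y - ℓ y e • e + ℓ y (A e) • A e ∈ W' := by
        rw [hmem]
        constructor
        · have : Le (y - ℓ y e • e + ℓ y (A e) • A e) =
              Le y - ℓ y e * Le e + ℓ y (A e) * Le (A e) := by
            rw [map_add, map_sub, map_smul, map_smul, smul_eq_mul, smul_eq_mul]
          rw [← hLe]
          rw [this, hLe, hLe, hLe, he1, he0]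
          ring
        · have : LAe (y - ℓ y e • e + ℓ y (A e) • A e) =
              LAe y - ℓ y e * LAe e + ℓ y (A e) * LAe (A e) := by
            rw [map_add, map_sub, map_smul, map_smul, smul_eq_mul, smul_eq_mul]
          rw [← hLAe]
          rw [this, hLAe, hLAe, hLAe, heAe, hAeAe]
          ring
      have h1 := hx ⟨_, hy'⟩
      have h2 : ℓ ↑x (y - ℓ y e • e + ℓ y (A e) • A e) = 0 := h1
      rw [laddr, lsubr, lsmulr, lsmulr, hx1, hx2] at h2
      simpa using h2
    obtain ⟨p', hp', c, hgram', hA'⟩ :=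
      ih (finrank ℂ ↥W') (by omega) ↥W' ℓ'
        (fun x₁ x₂ y => by
          show ℓ ↑(x₁ + x₂) ↑y = _
          rw [Submodule.coe_add]; exact hladd _ _ _)
        (fun a x y => by
          show ℓ ↑(a • x) ↑y = _
          rw [Submodule.coe_smul]; exact hlsmul _ _ _)
        (fun x y => hlherm ↑x ↑y)
        hlnd'
        A'
        (fun x y => by
          apply Subtype.ext
          show A ↑(x + y) = A ↑x + A ↑y
          rw [Submodule.coe_add]; exact hAadd _ _)
        (fun a x => by
          apply Subtype.ext
          show A ↑(a • x) = starRingEnd ℂ a • A ↑x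
          rw [Submodule.coe_smul]; exact hAsmul _ _)
        (fun x y => hAsa ↑x ↑y)
        (fun v => by
          apply Subtype.ext
          show A (A ↑v) = ↑(-v)
          rw [Submodule.coe_neg]; exact hA2 _)
        rfl
    have hn2 : n = 2 * (p' + 1) := by omega
    -- facts about the basis vectors of W'
    have hce1 : ∀ j : Fin (2 * p'), ℓ ↑(c j) e = 0 := fun j => ((hmem _).mp (c j).2).1
    have hce2 : ∀ j : Fin (2 * p'), ℓ ↑(c j) (A e) = 0 := fun j => ((hmem _).mp (c j).2).2
    have hec : ∀ j : Fin (2 * p'), ℓ e ↑(c j) = 0 := fun j => by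
      rw [hlherm (↑(c j)) e, hce1, map_zero]
    have hAec : ∀ j : Fin (2 * p'), ℓ (A e) ↑(c j) = 0 := fun j => by
      rw [hlherm (↑(c j)) (A e), hce2, map_zero]
    have hcc : ∀ j k : Fin (2 * p'),
        ℓ ↑(c j) ↑(c k) = if j = k then (if (j : ℕ) < p' then 1 else -1) else 0 :=
      fun j k => hgram' j k
    have hAc : ∀ j : Fin (2 * p'),
        A ↑(c j) = if h : (j : ℕ) < p' then
            ((c ⟨(j : ℕ) + p', (by have := j.isLt; omega : (j : ℕ) + p' < 2 * p' + 0)⟩ : ↥W') : V)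
          else -((c ⟨(j : ℕ) - p', (by have := j.isLt; omega : (j : ℕ) - p' < 2 * p' + 0)⟩ : ↥W') : V) := by
      intro j
      have h := congrArg (fun x : ↥W' => (x : V)) (hA' j)
      simp only [apply_dite (fun x : ↥W' => (x : V)), Submodule.coe_neg] at h
      exact h
    obtain ⟨bfam, hgram2, hAim⟩ := buildFam V ℓ A p' e (fun j => ↑(c j))
      he1 he0 heAe hAeAe (hA2 e) hce1 hce2 hec hAec hcc hAc
    -- linear independence
    have hli : LinearIndependent ℂ bfam := by
      rw [Fintype.linearIndependent_iff]
      intro g hg j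
      obtain ⟨L, hL⟩ := Lfun (bfam j)
      have h0 : L (∑ i, g i • bfam i) = 0 := by rw [hg, map_zero]
      rw [map_sum] at h0
      simp only [map_smul, smul_eq_mul, hL, hlsmul] at h0
      have hsum : ∑ i : Fin (2 * (p' + 1)), g i * ℓ (bfam i) (bfam j) =
          g j * ℓ (bfam j) (bfam j) :=
        Finset.sum_eq_single j (fun i _ hij => by rw [hgram2, if_neg hij, mul_zero])
          (fun h => absurd (Finset.mem_univ j) h)
      rw [hsum, hgram2, if_pos rfl] at h0
      split_ifs at h0
      · simpa using h0
      · simpa using h0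
    haveI : Nonempty (Fin (2 * (p' + 1))) := ⟨⟨0, by omega⟩⟩
    have hcard : Fintype.card (Fin (2 * (p' + 1))) = finrank ℂ V := by
      rw [Fintype.card_fin, hn, hn2]
    refine ⟨p' + 1, by rw [hn, hn2], basisOfLinearIndependentOfCardEqFinrank hli hcard,
      ?_, ?_⟩
    · intro i j
      rw [coe_basisOfLinearIndependentOfCardEqFinrank]
      exact hgram2 i j
    · intro i
      simp only [coe_basisOfLinearIndependentOfCardEqFinrank]
      exact hAim i


/-- If `ℓ` is nondegenerate Hermitian and `A` is anti-linear, `ℓ`-self-adjoint with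
`A² = -Id`, then `dim V = 2p` is even, `ℓ` has signature `(p, p)`, and there is a basis in
which `ℓ` is `diag(1_p, -1_p)` and `A` is `[[0, -1_p],[1_p, 0]]` composed with coordinate
conjugation (i.e. `A e_a = e_{p+a}`, `A e_{p+a} = -e_a`). -/
theorem stmt6 (V : Type*) [AddCommGroup V] [Module ℂ V] [FiniteDimensional ℂ V]
    (ℓ : V → V → ℂ)
    (hladd : ∀ x₁ x₂ y : V, ℓ (x₁ + x₂) y = ℓ x₁ y + ℓ x₂ y)
    (hlsmul : ∀ (c : ℂ) (x y : V), ℓ (c • x) y = c * ℓ x y)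
    (hlherm : ∀ x y : V, ℓ y x = starRingEnd ℂ (ℓ x y))
    (hlnd : ∀ x : V, (∀ y : V, ℓ x y = 0) → x = 0)
    (A : V → V)
    (hAadd : ∀ x y : V, A (x + y) = A x + A y)
    (hAsmul : ∀ (c : ℂ) (x : V), A (c • x) = starRingEnd ℂ c • A x)
    (hAsa : ∀ x y : V, ℓ (A x) y = ℓ (A y) x)
    (hA2 : ∀ v : V, A (A v) = -v) :
    ∃ p : ℕ, Module.finrank ℂ V = 2 * p ∧
      ∃ b : Module.Basis (Fin (2 * p)) ℂ V,
        (∀ i j : Fin (2 * p),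
          ℓ (b i) (b j) = if i = j then (if (i : ℕ) < p then 1 else -1) else 0) ∧
        (∀ i : Fin (2 * p),
          A (b i) = if h : (i : ℕ) < p then b ⟨(i : ℕ) + p, by have := i.isLt; omega⟩
            else -b ⟨(i : ℕ) - p, by have := i.isLt; omega⟩) := by
  exact keyAux (Module.finrank ℂ V) V ℓ hladd hlsmul hlherm hlnd A hAadd hAsmul hAsa hA2 rfl
end

section
/- Let V be a finite-dimensional complex vector space with nondegenerate Hermitian form ℓ and A : V → V anti-linear, ℓ-self-adjoint, with A³ = 0 and A² ≠ 0. Then there exists a vector a₁ ∈ V with ℓ(A² a₁, a₁) real and nonzero. -/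
/-- If `ℓ` is nondegenerate Hermitian and `A` is anti-linear, `ℓ`-self-adjoint, with
`A³ = 0` and `A² ≠ 0`, then there exists `a₁` with `ℓ(A² a₁, a₁)` real and nonzero. -/
theorem stmt7 (V : Type*) [AddCommGroup V] [Module ℂ V] [FiniteDimensional ℂ V]
    (ℓ : V → V → ℂ)
    (hladd : ∀ x₁ x₂ y : V, ℓ (x₁ + x₂) y = ℓ x₁ y + ℓ x₂ y)
    (hlsmul : ∀ (c : ℂ) (x y : V), ℓ (c • x) y = c * ℓ x y)
    (hlherm : ∀ x y : V, ℓ y x = starRingEnd ℂ (ℓ x y))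
    (hlnd : ∀ x : V, (∀ y : V, ℓ x y = 0) → x = 0)
    (A : V → V)
    (hAadd : ∀ x y : V, A (x + y) = A x + A y)
    (hAsmul : ∀ (c : ℂ) (x : V), A (c • x) = starRingEnd ℂ c • A x)
    (hAsa : ∀ x y : V, ℓ (A x) y = ℓ (A y) x)
    (hA3 : ∀ v : V, A (A (A v)) = 0)
    (hA2 : ∃ v : V, A (A v) ≠ 0) :
    ∃ a : V, (ℓ (A (A a)) a).im = 0 ∧ ℓ (A (A a)) a ≠ 0 := by
  by_contra h
  push_neg at h
  -- second-slot linearity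
  have hladd2 : ∀ x y z : V, ℓ x (y + z) = ℓ x y + ℓ x z := by
    intro x y z
    rw [hlherm (y + z) x, hladd, map_add, ← hlherm y x, ← hlherm z x]
  have hlsmul2 : ∀ (c : ℂ) (x y : V), ℓ x (c • y) = starRingEnd ℂ c * ℓ x y := by
    intro c x y
    rw [hlherm (c • y) x, hlsmul, map_mul, ← hlherm y x]
  -- the diagonal values are real
  have hself : ∀ x : V, (ℓ x x).im = 0 := by
    intro x
    have hx := hlherm x x
    have : (ℓ x x).im = -(ℓ x x).im := by
      conv_lhs => rw [hx]
      simp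
    linarith
  have hfact : ∀ a : V, ℓ (A (A a)) a = ℓ (A a) (A a) := fun a => hAsa (A a) a
  -- by the contradiction hypothesis, all diagonal values of B vanish
  have hzero : ∀ a : V, ℓ (A a) (A a) = 0 := by
    intro a
    have him : (ℓ (A (A a)) a).im = 0 := by rw [hfact]; exact hself (A a)
    have h0 := h a him
    rwa [hfact] at h0
  -- polarization: all values of B vanish
  have key : ∀ a b : V, ℓ (A a) (A b) = 0 := by
    intro a b
    have e1 := hzero (a + b)
    rw [hAadd, hladd, hladd2, hladd2, hzero a, hzero b] at e1
    have e2 := hzero (a + Complex.I • b)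
    simp only [hAadd, hAsmul, hladd, hladd2, hlsmul, hlsmul2, Complex.conj_conj,
      Complex.conj_I, Complex.conj_neg_I, hzero a, hzero b] at e2
    have hst : ℓ (A a) (A b) = ℓ (A b) (A a) := by
      have h3 : Complex.I * (ℓ (A a) (A b) - ℓ (A b) (A a)) = 0 := by
        linear_combination e2
      rcases mul_eq_zero.1 h3 with h4 | h4
      · exact absurd h4 Complex.I_ne_zero
      · linear_combination h4
    linear_combination e1 / 2 + hst / 2
  have hA20 : ∀ v : V, A (A v) = 0 := by
    intro v
    apply hlnd
    intro y
    rw [hAsa (A v) y]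
    exact key y v
  obtain ⟨v, hv⟩ := hA2
  exact hv (hA20 v)
end

section
/- Let 𝔤 = ⊕_{i∈ℤ} 𝔤_i and 𝔥 = ⊕_{i∈ℤ} 𝔥_i be finite-dimensional ℤ-graded Lie algebras, and let 𝒜 be a filtered Lie algebra with decreasing filtration {𝒜_κ} whose associated graded Lie algebra is isomorphic to 𝔤 as a graded Lie algebra. If 𝔤 contains a grading element E (i.e., E ∈ 𝔤₀ with [E, y] = i·y for all y ∈ 𝔤_i), then 𝒜 is isomorphic to 𝔤 as a filtered Lie algebra (where 𝔤 carries the filtration 𝔤^κ = ⊕_{i≥κ} 𝔤_i). -/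
section PrjAux
variable {M : Type*} [AddCommGroup M] [Module ℝ M] {B : ℤ → Submodule ℝ M}

/-- Projection onto the `k`-th piece of an internal direct sum decomposition. -/
noncomputable def stmt15prj (h : DirectSum.IsInternal B) (k : ℤ) : M →ₗ[ℝ] M :=
  (B k).subtype ∘ₗ (DirectSum.component ℝ ℤ (fun i => B i) k) ∘ₗ
    (LinearEquiv.ofBijective (DirectSum.coeLinearMap B) h).symm.toLinearMap

theorem stmt15prj_apply (h : DirectSum.IsInternal B) (k : ℤ) (x : M) :
    stmt15prj h k x = ((LinearEquiv.ofBijective (DirectSum.coeLinearMap B) h).symm x k : M) :=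
  rfl

theorem stmt15prj_mem (h : DirectSum.IsInternal B) (k : ℤ) (x : M) :
    stmt15prj h k x ∈ B k := ((LinearEquiv.ofBijective (DirectSum.coeLinearMap B) h).symm x k).2

theorem stmt15prj_of_mem_same (h : DirectSum.IsInternal B) {i : ℤ} {x : M} (hx : x ∈ B i) :
    stmt15prj h i x = x := by
  rw [stmt15prj_apply, h.ofBijective_coeLinearMap_of_mem hx]

theorem stmt15prj_of_mem_ne (h : DirectSum.IsInternal B) {i k : ℤ} {x : M} (hx : x ∈ B i)
    (hik : i ≠ k) : stmt15prj h k x = 0 := by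
  rw [stmt15prj_apply, h.ofBijective_coeLinearMap_of_mem_ne hik hx, Submodule.coe_zero]

theorem stmt15prj_eq_zero (h : DirectSum.IsInternal B) {x : M}
    (h0 : ∀ k, stmt15prj h k x = 0) : x = 0 := by
  have hz : (LinearEquiv.ofBijective (DirectSum.coeLinearMap B) h).symm x = 0 := by
    apply DFinsupp.ext
    intro k
    have := h0 k
    rw [stmt15prj_apply] at this
    exact Subtype.ext this
  simpa using (LinearEquiv.ofBijective (DirectSum.coeLinearMap B) h).symm.map_eq_zero_iff.mp hz

end PrjAux


section PFAux
variable {g : Type*} [AddCommGroup g] [Module ℝ g] {G : ℤ → Submodule ℝ g}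

theorem stmt15prj_F_eq_zero (hint : DirectSum.IsInternal G) {κ k : ℤ} (hk : k < κ) {z : g}
    (hz : z ∈ ⨆ (i : ℤ) (_ : κ ≤ i), G i) : stmt15prj hint k z = 0 := by
  have : (⨆ (i : ℤ) (_ : κ ≤ i), G i) ≤ LinearMap.ker (stmt15prj hint k) := by
    refine iSup₂_le fun i hi => fun w hw => ?_
    simp only [LinearMap.mem_ker]
    exact stmt15prj_of_mem_ne hint hw (by omega)
  exact this hz

theorem stmt15prj_F_shift (hint : DirectSum.IsInternal G) {κ : ℤ} {z : g}
    (hz : z ∈ ⨆ (i : ℤ) (_ : κ ≤ i), G i) :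
    z - stmt15prj hint κ z ∈ ⨆ (i : ℤ) (_ : κ + 1 ≤ i), G i := by
  have : (⨆ (i : ℤ) (_ : κ ≤ i), G i) ≤
      Submodule.comap (LinearMap.id - stmt15prj hint κ) (⨆ (i : ℤ) (_ : κ + 1 ≤ i), G i) := by
    refine iSup₂_le fun i hi => fun w hw => ?_
    simp only [Submodule.mem_comap, LinearMap.sub_apply, LinearMap.id_apply]
    rcases eq_or_lt_of_le hi with h | h
    · subst h; rw [stmt15prj_of_mem_same hint hw]; simp
    · rw [stmt15prj_of_mem_ne hint hw (by omega)]
      rw [sub_zero]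
      exact le_iSup₂ (f := fun i (_ : κ + 1 ≤ i) => G i) i (by omega) hw
  have h2 := this hz
  simpa using h2

end PFAux

section FAux
variable {g : Type*} [LieRing g] [LieAlgebra ℝ g] {G : ℤ → Submodule ℝ g}

theorem stmt15G_le_F {κ i : ℤ} (h : κ ≤ i) : G i ≤ ⨆ (i : ℤ) (_ : κ ≤ i), G i :=
  le_iSup₂ (f := fun i (_ : κ ≤ i) => G i) i h

theorem stmt15F_le {κ : ℤ} {p : Submodule ℝ g} (h : ∀ i, κ ≤ i → G i ≤ p) :
    (⨆ (i : ℤ) (_ : κ ≤ i), G i) ≤ p := iSup₂_le h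

theorem stmt15F_anti {κ κ' : ℤ} (h : κ ≤ κ') :
    (⨆ (i : ℤ) (_ : κ' ≤ i), G i) ≤ ⨆ (i : ℤ) (_ : κ ≤ i), G i :=
  stmt15F_le fun i hi => stmt15G_le_F (h.trans hi)

theorem stmt15F_br (hgraded : ∀ i j : ℤ, ∀ x ∈ G i, ∀ y ∈ G j, ⁅x, y⁆ ∈ G (i + j))
    (a b : ℤ) {u v : g} (hu : u ∈ ⨆ (i : ℤ) (_ : a ≤ i), G i)
    (hv : v ∈ ⨆ (i : ℤ) (_ : b ≤ i), G i) :
    ⁅u, v⁆ ∈ ⨆ (i : ℤ) (_ : a + b ≤ i), G i := by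
  have L1 : ∀ i : ℤ, a ≤ i → ∀ u ∈ G i, ∀ v ∈ (⨆ (j : ℤ) (_ : b ≤ j), G j),
      ⁅u, v⁆ ∈ ⨆ (k : ℤ) (_ : a + b ≤ k), G k := by
    intro i hi u hu v hv
    have : (⨆ (j : ℤ) (_ : b ≤ j), G j) ≤
        Submodule.comap (LieAlgebra.ad ℝ g u) (⨆ (k : ℤ) (_ : a + b ≤ k), G k) := by
      refine stmt15F_le fun j hj => fun w hw => ?_
      simp only [Submodule.mem_comap, LieAlgebra.ad_apply]
      exact stmt15G_le_F (by omega) (hgraded i j u hu w hw)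
    simpa using this hv
  have : (⨆ (i : ℤ) (_ : a ≤ i), G i) ≤
      Submodule.comap (-(LieAlgebra.ad ℝ g v)) (⨆ (k : ℤ) (_ : a + b ≤ k), G k) := by
    refine stmt15F_le fun i hi => fun w hw => ?_
    simp only [Submodule.mem_comap, LinearMap.neg_apply, LieAlgebra.ad_apply, lie_skew]
    exact L1 i hi w hw v hv
  have h2 := this hu
  simp only [Submodule.mem_comap, LinearMap.neg_apply, LieAlgebra.ad_apply] at h2
  rwa [lie_skew] at h2

theorem stmt15F_E {E : g} (hgradingE : ∀ i : ℤ, ∀ y ∈ G i, ⁅E, y⁆ = (i : ℝ) • y)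
    (κ : ℤ) {z : g} (hz : z ∈ ⨆ (i : ℤ) (_ : κ ≤ i), G i) :
    ⁅E, z⁆ - (κ : ℝ) • z ∈ ⨆ (i : ℤ) (_ : κ + 1 ≤ i), G i := by
  have : (⨆ (i : ℤ) (_ : κ ≤ i), G i) ≤
      Submodule.comap (LieAlgebra.ad ℝ g E - (κ : ℝ) • (1 : Module.End ℝ g))
        (⨆ (i : ℤ) (_ : κ + 1 ≤ i), G i) := by
    refine stmt15F_le fun i hi => fun w hw => ?_
    simp only [Submodule.mem_comap, LinearMap.sub_apply, LinearMap.smul_apply,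
      Module.End.one_apply, LieAlgebra.ad_apply]
    rw [hgradingE i w hw]
    rcases eq_or_lt_of_le hi with h | h
    · subst h; simp
    · have hmem : (i : ℝ) • w - (κ : ℝ) • w ∈ G i := by
        rw [← sub_smul]; exact Submodule.smul_mem _ _ hw
      exact stmt15G_le_F (by omega) hmem
  have h2 := this hz
  simp only [Submodule.mem_comap, LinearMap.sub_apply, LinearMap.smul_apply,
    Module.End.one_apply, LieAlgebra.ad_apply] at h2
  exact h2
end FAux

section RAux
variable {V : Type*} [AddCommGroup V] [Module ℝ V]

/-- Iterated application of `(D - t), (D - (t+1)), ...` (in increasing order). -/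
noncomputable def stmt15R (D : Module.End ℝ V) : ℤ → ℕ → Module.End ℝ V
  | _, 0 => 1
  | t, s + 1 => (stmt15R D (t + 1) s) ∘ₗ (D - (t : ℝ) • (1 : Module.End ℝ V))

theorem stmt15R_swap (D : Module.End ℝ V) (a b : ℝ) (x : V) :
    (D - a • 1) ((D - b • 1) x) = (D - b • 1) ((D - a • 1) x) := by
  simp only [LinearMap.sub_apply, LinearMap.smul_apply, Module.End.one_apply, map_sub, map_smul,
    smul_sub, smul_smul]
  rw [mul_comm]
  abel

theorem stmt15R_comm (D : Module.End ℝ V) (m : ℤ) :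
    ∀ (s : ℕ) (t : ℤ) (x : V),
      (D - (m : ℝ) • 1) (stmt15R D t s x) = stmt15R D t s ((D - (m : ℝ) • 1) x) := by
  intro s
  induction s with
  | zero => intro t x; rfl
  | succ s ih =>
    intro t x
    show (D - (m : ℝ) • 1) (stmt15R D (t + 1) s ((D - (t : ℝ) • 1) x)) = _
    rw [ih, stmt15R_swap]
    rfl

end RAux

/-- If a filtered Lie algebra `𝒜` has associated graded Lie algebra isomorphic to a
finite-dimensional graded Lie algebra `g` that contains a grading element `E`, then `𝒜`
is isomorphic to `g` as a filtered Lie algebra (where `g` carries the filtration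
`g^κ = ⊕_{i ≥ κ} g_i`). The associated-graded isomorphism is encoded by a filtration-
preserving linear equivalence `φ` which respects brackets modulo one filtration level
deeper. -/
theorem stmt15
    (g : Type*) [LieRing g] [LieAlgebra ℝ g] [FiniteDimensional ℝ g]
    (𝒜 : Type*) [LieRing 𝒜] [LieAlgebra ℝ 𝒜]
    (G : ℤ → Submodule ℝ g)
    (hinternal : DirectSum.IsInternal G)
    (hgraded : ∀ i j : ℤ, ∀ x ∈ G i, ∀ y ∈ G j, ⁅x, y⁆ ∈ G (i + j))
    (E : g) (hE : E ∈ G 0)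
    (hgradingE : ∀ i : ℤ, ∀ y ∈ G i, ⁅E, y⁆ = (i : ℝ) • y)
    (A : ℤ → Submodule ℝ 𝒜)
    (hA_anti : ∀ i j : ℤ, i ≤ j → A j ≤ A i)
    (hA_br : ∀ i j : ℤ, ∀ x ∈ A i, ∀ y ∈ A j, ⁅x, y⁆ ∈ A (i + j))
    (φ : 𝒜 ≃ₗ[ℝ] g)
    (hφ_filt : ∀ κ : ℤ,
      Submodule.map (φ : 𝒜 →ₗ[ℝ] g) (A κ) = ⨆ (i : ℤ) (_ : κ ≤ i), G i)
    (hφ_gr : ∀ i j : ℤ, ∀ x ∈ A i, ∀ y ∈ A j,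
      φ ⁅x, y⁆ - ⁅φ x, φ y⁆ ∈ ⨆ (k : ℤ) (_ : i + j + 1 ≤ k), G k) :
    ∃ ψ : 𝒜 ≃ₗ⁅ℝ⁆ g, ∀ κ : ℤ,
      Submodule.map ψ.toLieHom.toLinearMap (A κ) = ⨆ (i : ℤ) (_ : κ ≤ i), G i := by
  classical
  haveI : FiniteDimensional ℝ 𝒜 := φ.symm.finiteDimensional
  -- membership in the filtration via φ
  have memA : ∀ (κ : ℤ) (x : 𝒜), x ∈ A κ ↔ φ x ∈ ⨆ (i : ℤ) (_ : κ ≤ i), G i := by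
    intro κ x
    constructor
    · intro hx
      rw [← hφ_filt κ]
      exact Submodule.mem_map_of_mem hx
    · intro hx
      rw [← hφ_filt κ] at hx
      obtain ⟨y, hy, hyx⟩ := hx
      have hxy : y = x := φ.injective hyx
      rwa [← hxy]
  -- finitely many nonzero graded pieces, with bounds n₀ ≤ · ≤ n₁
  have hsfin : {i : ℤ | G i ≠ ⊥}.Finite := by
    have hind := hinternal.submodule_iSupIndep
    have hch : ∀ i : {i : ℤ | G i ≠ ⊥}, ∃ v, v ∈ G i ∧ v ≠ 0 := by
      intro i
      obtain ⟨v, hv, hv0⟩ := (Submodule.ne_bot_iff _).mp i.2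
      exact ⟨v, hv, hv0⟩
    choose v hv hv0 using hch
    have hli : LinearIndependent ℝ v :=
      (hind.comp Subtype.val_injective).linearIndependent _ hv hv0
    haveI := hli.finite
    exact Set.toFinite _
  obtain ⟨n₁, hn₁⟩ : ∃ n₁ : ℤ, ∀ i : ℤ, G i ≠ ⊥ → i ≤ n₁ := by
    obtain ⟨n, hn⟩ := hsfin.bddAbove
    exact ⟨n, fun i hi => hn hi⟩
  obtain ⟨n₀, hn₀⟩ : ∃ n₀ : ℤ, ∀ i : ℤ, G i ≠ ⊥ → n₀ ≤ i := by
    obtain ⟨n, hn⟩ := hsfin.bddBelow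
    exact ⟨n, fun i hi => hn hi⟩
  have hFtop : ∀ κ : ℤ, κ ≤ n₀ → (⨆ (i : ℤ) (_ : κ ≤ i), G i) = ⊤ := by
    intro κ hκ
    rw [eq_top_iff, ← hinternal.submodule_iSup_eq_top]
    refine iSup_le fun i => ?_
    by_cases hGi : G i = ⊥
    · rw [hGi]; exact bot_le
    · exact stmt15G_le_F (hκ.trans (hn₀ i hGi))
  have hFbot : ∀ κ : ℤ, n₁ < κ → (⨆ (i : ℤ) (_ : κ ≤ i), G i) = ⊥ := by
    intro κ hκ
    rw [eq_bot_iff]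
    refine stmt15F_le fun i hi => ?_
    by_cases hGi : G i = ⊥
    · rw [hGi]
    · exact absurd (hn₁ i hGi) (by omega)
  have hAtop : ∀ κ : ℤ, κ ≤ n₀ → A κ = ⊤ := by
    intro κ hκ
    rw [eq_top_iff]
    intro x _
    rw [memA, hFtop κ hκ]
    trivial
  have hAbot : ∀ κ : ℤ, n₁ < κ → A κ = ⊥ := by
    intro κ hκ
    rw [eq_bot_iff]
    intro x hx
    rw [memA, hFbot κ hκ, Submodule.mem_bot] at hx
    simpa using φ.map_eq_zero_iff.mp hx
  -- the lifted grading element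
  set e : 𝒜 := φ.symm E with he_def
  have hφe : φ e = E := φ.apply_symm_apply E
  have he0 : e ∈ A 0 := by
    rw [memA, hφe]
    exact stmt15G_le_F le_rfl hE
  set D : Module.End ℝ 𝒜 := LieAlgebra.ad ℝ 𝒜 e with hD_def
  have hD_apply : ∀ x : 𝒜, D x = ⁅e, x⁆ := fun x => rfl
  have hDA : ∀ (κ : ℤ) (x : 𝒜), x ∈ A κ → D x ∈ A κ := by
    intro κ x hx
    have h := hA_br 0 κ e he0 x hx
    rwa [zero_add] at h
  have key1 : ∀ (κ : ℤ) (x : 𝒜), x ∈ A κ → D x - (κ : ℝ) • x ∈ A (κ + 1) := by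
    intro κ x hx
    rw [memA]
    have h1 := hφ_gr 0 κ e he0 x hx
    rw [zero_add] at h1
    have h2 := stmt15F_E hgradingE κ ((memA κ x).mp hx)
    have heq : φ (D x - (κ : ℝ) • x)
        = (φ ⁅e, x⁆ - ⁅φ e, φ x⁆) + (⁅E, φ x⁆ - (κ : ℝ) • φ x) := by
      simp only [map_sub, map_smul, hD_apply, hφe]
      abel
    rw [heq]
    exact Submodule.add_mem _ h1 h2
  -- eigenspaces of D
  set Ai : ℤ → Submodule ℝ 𝒜 := fun i => Module.End.eigenspace D (i : ℝ) with hAi_def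
  have memAi : ∀ (i : ℤ) (x : 𝒜), x ∈ Ai i ↔ D x = (i : ℝ) • x := by
    intro i x
    exact Module.End.mem_eigenspace_iff
  have push : ∀ (κ i : ℤ) (x : 𝒜), x ∈ Ai i → x ∈ A κ → κ ≠ i → x ∈ A (κ + 1) := by
    intro κ i x hxi hxκ hne
    have h1 := key1 κ x hxκ
    rw [(memAi i x).mp hxi] at h1
    have h2 : ((i : ℝ) - κ) • x ∈ A (κ + 1) := by rwa [← sub_smul] at h1
    have h3 : ((i : ℝ) - (κ : ℝ)) ≠ 0 := sub_ne_zero.mpr (by exact_mod_cast hne.symm)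
    have h4 := Submodule.smul_mem _ ((i : ℝ) - κ)⁻¹ h2
    rwa [inv_smul_smul₀ h3] at h4
  have push_many : ∀ (m : ℕ) (κ i : ℤ) (x : 𝒜), x ∈ Ai i → x ∈ A κ →
      (i < κ ∨ κ + m ≤ i) → x ∈ A (κ + m) := by
    intro m
    induction m with
    | zero =>
      intro κ i x _ hx _
      simpa using hx
    | succ m ih =>
      intro κ i x hxi hx hcond
      have hx' : x ∈ A (κ + m) := ih κ i x hxi hx (by omega)
      have hx'' : x ∈ A ((κ + m) + 1) := push (κ + m) i x hxi hx' (by omega)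
      have harith : κ + ((m + 1 : ℕ) : ℤ) = (κ + m) + 1 := by push_cast; ring
      rwa [harith]
  have eig_in : ∀ (i : ℤ) (x : 𝒜), x ∈ Ai i → x ∈ A i := by
    intro i x hxi
    rcases le_or_gt n₀ i with hi | hi
    · have hx0 : x ∈ A n₀ := by rw [hAtop n₀ le_rfl]; trivial
      have h := push_many (i - n₀).toNat n₀ i x hxi hx0 (by right; omega)
      have harith : n₀ + (((i - n₀).toNat : ℕ) : ℤ) = i := by omega
      rwa [harith] at h
    · rw [hAtop i hi.le]; trivial
  have eig_zero : ∀ (i : ℤ) (x : 𝒜), x ∈ Ai i → x ∈ A (i + 1) → x = 0 := by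
    intro i x hxi hx
    have h := push_many (n₁ - i).toNat (i + 1) i x hxi hx (by left; omega)
    have hbot : A (i + 1 + (((n₁ - i).toNat : ℕ) : ℤ)) = ⊥ := hAbot _ (by omega)
    rw [hbot] at h
    simpa using h
  have AiBot : ∀ i : ℤ, (i < n₀ ∨ n₁ < i) → Ai i = ⊥ := by
    intro i hi
    rw [eq_bot_iff]
    intro x hx
    rcases hi with hi | hi
    · have hx1 : x ∈ A (i + 1) := by rw [hAtop (i + 1) (by omega)]; trivial
      simpa using eig_zero i x hx hx1
    · have h := eig_in i x hx
      rw [hAbot i hi] at h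
      simpa using h
  -- the operators ∏ (D - m)
  have chain : ∀ (s : ℕ) (t : ℤ) (x : 𝒜), x ∈ A t → stmt15R D t s x ∈ A (t + s) := by
    intro s
    induction s with
    | zero =>
      intro t x hx
      simpa [stmt15R] using hx
    | succ s ih =>
      intro t x hx
      have h1 : (D - (t : ℝ) • 1) x ∈ A (t + 1) := by
        have h := key1 t x hx
        simpa using h
      have h2 := ih (t + 1) _ h1
      have harith : t + 1 + (s : ℤ) = t + ((s + 1 : ℕ) : ℤ) := by push_cast; ring
      rw [harith] at h2
      simpa [stmt15R] using h2
  have RconstA : ∀ (s : ℕ) (t κ : ℤ) (x : 𝒜), κ < t → x ∈ A κ →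
      ∃ c : ℝ, c ≠ 0 ∧ stmt15R D t s x - c • x ∈ A (κ + 1) := by
    intro s
    induction s with
    | zero =>
      intro t κ x _ _
      refine ⟨1, one_ne_zero, ?_⟩
      simpa [stmt15R] using Submodule.zero_mem (A (κ + 1))
    | succ s ih =>
      intro t κ x ht hx
      set x' : 𝒜 := (D - (t : ℝ) • 1) x with hx'_def
      have hx'A : x' ∈ A κ := by
        rw [hx'_def]
        simp only [LinearMap.sub_apply, LinearMap.smul_apply, Module.End.one_apply]
        exact Submodule.sub_mem _ (hDA κ x hx) (Submodule.smul_mem _ _ hx)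
      obtain ⟨c', hc'0, hc'⟩ := ih (t + 1) κ x' (by omega) hx'A
      have hx'key : x' - ((κ : ℝ) - t) • x ∈ A (κ + 1) := by
        have h := key1 κ x hx
        have heq : x' - ((κ : ℝ) - t) • x = D x - (κ : ℝ) • x := by
          rw [hx'_def]
          simp only [LinearMap.sub_apply, LinearMap.smul_apply, Module.End.one_apply, sub_smul]
          abel
        rwa [heq]
      refine ⟨c' * ((κ : ℝ) - t), mul_ne_zero hc'0
        (sub_ne_zero.mpr (by exact_mod_cast ht.ne)), ?_⟩
      have heq : stmt15R D (t + 1) s x' - (c' * ((κ : ℝ) - t)) • x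
          = (stmt15R D (t + 1) s x' - c' • x') + c' • (x' - ((κ : ℝ) - t) • x) := by
        rw [smul_sub, smul_smul]
        abel
      have hmem := Submodule.add_mem _ hc' (Submodule.smul_mem _ c' hx'key)
      rw [← heq] at hmem
      have hR : stmt15R D t (s + 1) x = stmt15R D (t + 1) s x' := rfl
      rw [hR]
      exact hmem
  have split : ∀ (κ : ℤ) (x : 𝒜), x ∈ A κ → ∃ v ∈ Ai κ, x - v ∈ A (κ + 1) := by
    intro κ x hx
    rcases le_or_gt κ n₁ with hκ | hκ
    · set s : ℕ := (n₁ - κ).toNat with hs_def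
      set y : 𝒜 := stmt15R D (κ + 1) s x with hy_def
      obtain ⟨c, hc0, hc⟩ := RconstA s (κ + 1) κ x (by omega) hx
      have hyD : (D - (κ : ℝ) • 1) y = 0 := by
        rw [hy_def, stmt15R_comm]
        have h1 : (D - (κ : ℝ) • 1) x ∈ A (κ + 1) := by
          have h := key1 κ x hx
          simpa using h
        have h2 := chain s (κ + 1) _ h1
        have hb : A (κ + 1 + (s : ℤ)) = ⊥ := hAbot _ (by omega)
        rw [hb] at h2
        simpa using h2
      have hyAi : y ∈ Ai κ := by
        rw [memAi]
        have h : D y - (κ : ℝ) • y = 0 := by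
          simpa [LinearMap.sub_apply] using hyD
        exact sub_eq_zero.mp h
      refine ⟨c⁻¹ • y, Submodule.smul_mem _ _ hyAi, ?_⟩
      have heq : x - c⁻¹ • y = -(c⁻¹ • (y - c • x)) := by
        rw [smul_sub, smul_smul, inv_mul_cancel₀ hc0]
        simp only [one_smul, neg_sub]
      rw [heq]
      exact Submodule.neg_mem _ (Submodule.smul_mem _ _ hc)
    · refine ⟨0, Submodule.zero_mem _, ?_⟩
      rw [hAbot κ hκ] at hx
      rw [Submodule.mem_bot] at hx
      rw [hx]
      simpa using Submodule.zero_mem (A (κ + 1))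
  -- the filtration is split by the eigenspaces
  have hAsup' : ∀ (m : ℕ) (κ : ℤ), n₁ + 1 ≤ κ + m →
      A κ ≤ ⨆ (j : ℤ) (_ : κ ≤ j), Ai j := by
    intro m
    induction m with
    | zero =>
      intro κ hκ
      rw [hAbot κ (by omega)]
      exact bot_le
    | succ m ih =>
      intro κ hκ
      rcases le_or_gt (n₁ + 1) (κ + m) with h | h
      · exact ih κ h
      · intro x hx
        obtain ⟨v, hv, hxv⟩ := split κ x hx
        have h1 : x - v ∈ ⨆ (j : ℤ) (_ : κ + 1 ≤ j), Ai j := ih (κ + 1) (by omega) hxv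
        have h2 : (⨆ (j : ℤ) (_ : κ + 1 ≤ j), Ai j) ≤ ⨆ (j : ℤ) (_ : κ ≤ j), Ai j :=
          iSup₂_le fun j hj => le_iSup₂ (f := fun j (_ : κ ≤ j) => Ai j) j (by omega)
        have h3 : v ∈ ⨆ (j : ℤ) (_ : κ ≤ j), Ai j :=
          le_iSup₂ (f := fun j (_ : κ ≤ j) => Ai j) κ le_rfl hv
        have h4 := Submodule.add_mem _ h3 (h2 h1)
        simpa using h4
  have hAsup : ∀ κ : ℤ, A κ ≤ ⨆ (j : ℤ) (_ : κ ≤ j), Ai j := by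
    intro κ
    exact hAsup' (n₁ + 1 - κ).toNat κ (by omega)
  have hAiTop : (⨆ j : ℤ, Ai j) = ⊤ := by
    rw [eq_top_iff]
    calc (⊤ : Submodule ℝ 𝒜) = A n₀ := (hAtop n₀ le_rfl).symm
    _ ≤ ⨆ (j : ℤ) (_ : n₀ ≤ j), Ai j := hAsup n₀
    _ ≤ ⨆ j : ℤ, Ai j := iSup₂_le fun j _ => le_iSup _ j
  have hAiInd : iSupIndep Ai :=
    (Module.End.eigenspaces_iSupIndep D).comp (fun a b h => by exact_mod_cast h)
  have hAint : DirectSum.IsInternal Ai :=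
    DirectSum.isInternal_submodule_of_iSupIndep_of_iSup_eq_top hAiInd hAiTop
  -- the candidate isomorphism
  set ψlin : 𝒜 →ₗ[ℝ] g :=
    ∑ j ∈ Finset.Icc n₀ n₁,
      (stmt15prj hinternal j) ∘ₗ ((φ : 𝒜 →ₗ[ℝ] g) ∘ₗ (stmt15prj hAint j)) with hψ_def
  have ψ_apply : ∀ (k : ℤ) (z : 𝒜), z ∈ Ai k → ψlin z = stmt15prj hinternal k (φ z) := by
    intro k z hz
    by_cases hk : k ∈ Finset.Icc n₀ n₁
    · rw [hψ_def, LinearMap.sum_apply, Finset.sum_eq_single k]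
      · simp only [LinearMap.comp_apply, LinearEquiv.coe_coe]
        rw [stmt15prj_of_mem_same hAint hz]
      · intro j _ hjk
        simp only [LinearMap.comp_apply, LinearEquiv.coe_coe]
        rw [stmt15prj_of_mem_ne hAint hz hjk.symm]
        simp
      · intro hk'
        exact absurd hk hk'
    · have hz0 : z = 0 := by
        have hb : Ai k = ⊥ := AiBot k (by simp only [Finset.mem_Icc] at hk; omega)
        rw [hb] at hz
        simpa using hz
      rw [hz0]
      simp
  have ψ_mem : ∀ (k : ℤ) (z : 𝒜), z ∈ Ai k → ψlin z ∈ G k := by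
    intro k z hz
    rw [ψ_apply k z hz]
    exact stmt15prj_mem hinternal k _
  -- injectivity
  have hinj : Function.Injective ψlin := by
    rw [← LinearMap.ker_eq_bot, LinearMap.ker_eq_bot']
    intro x hx
    have hcomp : ∀ k : ℤ, stmt15prj hAint k x = 0 := by
      intro k
      by_cases hk : k ∈ Finset.Icc n₀ n₁
      · set xk : 𝒜 := stmt15prj hAint k x with hxk_def
        have hxkAi : xk ∈ Ai k := stmt15prj_mem hAint k x
        have hG : stmt15prj hinternal k (φ xk) = 0 := by
          have h1 : stmt15prj hinternal k (ψlin x) = 0 := by rw [hx]; simp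
          rw [hψ_def, LinearMap.sum_apply, map_sum, Finset.sum_eq_single k] at h1
          · simp only [LinearMap.comp_apply, LinearEquiv.coe_coe] at h1
            rwa [stmt15prj_of_mem_same hinternal (stmt15prj_mem hinternal k _)] at h1
          · intro j _ hjk
            simp only [LinearMap.comp_apply, LinearEquiv.coe_coe]
            rw [stmt15prj_of_mem_ne hinternal (stmt15prj_mem hinternal j _) hjk]
          · intro hk'
            exact absurd hk hk'
        have hxkA : xk ∈ A k := eig_in k xk hxkAi
        have hφxk := (memA k xk).mp hxkA
        have hsh := stmt15prj_F_shift hinternal hφxk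
        rw [hG, sub_zero] at hsh
        have hxk1 : xk ∈ A (k + 1) := (memA _ _).mpr hsh
        exact eig_zero k xk hxkAi hxk1
      · have hb : Ai k = ⊥ := AiBot k (by simp only [Finset.mem_Icc] at hk; omega)
        have hm := stmt15prj_mem hAint k x
        rw [hb] at hm
        simpa using hm
    exact stmt15prj_eq_zero hAint hcomp
  have hrange : LinearMap.range ψlin = ⊤ := by
    apply Submodule.eq_top_of_finrank_eq
    rw [LinearMap.finrank_range_of_inj hinj]
    exact φ.finrank_eq
  have hbij : Function.Bijective ψlin := ⟨hinj, LinearMap.range_eq_top.mp hrange⟩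
  -- ψ is a morphism of Lie algebras
  have hlie_core : ∀ (i j : ℤ) (x y : 𝒜), x ∈ Ai i → y ∈ Ai j →
      ψlin ⁅x, y⁆ = ⁅ψlin x, ψlin y⁆ := by
    intro i j x y hx hy
    have h1 : ⁅e, x⁆ = (i : ℝ) • x := (memAi i x).mp hx
    have h2 : ⁅e, y⁆ = (j : ℝ) • y := (memAi j y).mp hy
    have hxyAi : ⁅x, y⁆ ∈ Ai (i + j) := by
      rw [memAi, hD_apply, leibniz_lie, h1, h2, smul_lie, lie_smul]
      push_cast
      rw [add_smul]
    have hxA := eig_in i x hx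
    have hyA := eig_in j y hy
    have hr := hφ_gr i j x hxA y hyA
    have hu := (memA i x).mp hxA
    have hv := (memA j y).mp hyA
    set pu : g := stmt15prj hinternal i (φ x) with hpu_def
    set pv : g := stmt15prj hinternal j (φ y) with hpv_def
    have hpu : pu ∈ G i := stmt15prj_mem hinternal i _
    have hpv : pv ∈ G j := stmt15prj_mem hinternal j _
    have hu' := stmt15prj_F_shift hinternal hu
    have hv' := stmt15prj_F_shift hinternal hv
    have hw : ⁅φ x, φ y⁆ - ⁅pu, pv⁆ ∈ ⨆ (k : ℤ) (_ : i + j + 1 ≤ k), G k := by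
      have e1 : ⁅φ x, φ y⁆ - ⁅pu, pv⁆
          = ⁅pu, φ y - pv⁆ + ⁅φ x - pu, pv⁆ + ⁅φ x - pu, φ y - pv⁆ := by
        simp only [lie_sub, sub_lie]
        abel
      rw [e1]
      refine Submodule.add_mem _ (Submodule.add_mem _ ?_ ?_) ?_
      · have h := stmt15F_br hgraded i (j + 1) (stmt15G_le_F le_rfl hpu) hv'
        rwa [show i + (j + 1) = i + j + 1 by ring] at h
      · have h := stmt15F_br hgraded (i + 1) j hu' (stmt15G_le_F le_rfl hpv)
        rwa [show i + 1 + j = i + j + 1 by ring] at h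
      · have h := stmt15F_br hgraded (i + 1) (j + 1) hu' hv'
        exact stmt15F_anti (by omega) h
    have key : stmt15prj hinternal (i + j) (φ ⁅x, y⁆) = ⁅pu, pv⁆ := by
      have e2 : φ ⁅x, y⁆ = ⁅pu, pv⁆
          + ((φ ⁅x, y⁆ - ⁅φ x, φ y⁆) + (⁅φ x, φ y⁆ - ⁅pu, pv⁆)) := by
        abel
      rw [e2, map_add, map_add]
      rw [stmt15prj_of_mem_same hinternal (hgraded i j pu hpu pv hpv)]
      rw [stmt15prj_F_eq_zero hinternal (by omega) hr,
          stmt15prj_F_eq_zero hinternal (by omega) hw]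
      simp
    rw [ψ_apply (i + j) _ hxyAi, ψ_apply i x hx, ψ_apply j y hy, key]
  have hlie1 : ∀ (i : ℤ) (x : 𝒜), x ∈ Ai i → ∀ y : 𝒜,
      ψlin ⁅x, y⁆ = ⁅ψlin x, ψlin y⁆ := by
    intro i x hx y
    have hy : y ∈ ⨆ j : ℤ, Ai j := by rw [hAiTop]; trivial
    refine Submodule.iSup_induction (motive := fun y => ψlin ⁅x, y⁆ = ⁅ψlin x, ψlin y⁆)
      Ai hy ?_ ?_ ?_
    · intro j z hz
      exact hlie_core i j x z hx hz
    · simp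
    · intro a b ha hb
      simp only [lie_add, map_add, ha, hb]
  have hlie : ∀ x y : 𝒜, ψlin ⁅x, y⁆ = ⁅ψlin x, ψlin y⁆ := by
    intro x y
    have hx : x ∈ ⨆ j : ℤ, Ai j := by rw [hAiTop]; trivial
    refine Submodule.iSup_induction (motive := fun x => ψlin ⁅x, y⁆ = ⁅ψlin x, ψlin y⁆)
      Ai hx ?_ ?_ ?_
    · intro i z hz
      exact hlie1 i z hz y
    · simp
    · intro a b ha hb
      simp only [add_lie, map_add, ha, hb]
  -- ψ respects the filtrations
  have hψA : ∀ κ : ℤ, Submodule.map ψlin (A κ) = ⨆ (i : ℤ) (_ : κ ≤ i), G i := by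
    intro κ
    have hle : Submodule.map ψlin (A κ) ≤ ⨆ (i : ℤ) (_ : κ ≤ i), G i := by
      rw [Submodule.map_le_iff_le_comap]
      refine (hAsup κ).trans (iSup₂_le fun j hj => fun x hx => ?_)
      simp only [Submodule.mem_comap]
      exact stmt15G_le_F hj (ψ_mem j x hx)
    refine Submodule.eq_of_le_of_finrank_le hle ?_
    have h1 : Module.finrank ℝ (Submodule.map ψlin (A κ)) = Module.finrank ℝ (A κ) :=
      LinearEquiv.finrank_map_eq (LinearEquiv.ofBijective ψlin hbij) (A κ)
    have h2 : Module.finrank ℝ (A κ)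
        = Module.finrank ℝ (⨆ (i : ℤ) (_ : κ ≤ i), G i : Submodule ℝ g) := by
      rw [← hφ_filt κ]
      exact (LinearEquiv.finrank_map_eq φ (A κ)).symm
    rw [h1, h2]
  exact ⟨{ toLinearMap := ψlin, map_lie' := fun {x y} => hlie x y,
           invFun := (LinearEquiv.ofBijective ψlin hbij).symm,
           left_inv := (LinearEquiv.ofBijective ψlin hbij).left_inv,
           right_inv := (LinearEquiv.ofBijective ψlin hbij).right_inv }, hψA⟩
end
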